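/- For n ≥ 1 and τ = x+iy with y > 0, one has 2π n ∫_{-\bar τ}^{i∞} e^{2πizn²}/√(-i(z+τ)) dz = i √(2π) e^{-2πin²τ} Γ(1/2, 4π n² y), where Γ(1/2, 4πn²y) = ∫_{4πn²y}^{∞} e^{-t} t^{-1/2} dt. -/

import Mathlib

open Complex Real MeasureTheory

/-- The upper incomplete Gamma value `Γ(1/2, x) = ∫_x^∞ e^{-t} t^{-1/2} dt`. -/
noncomputable def incGammaHalf (x : ℝ) : ℝ :=
  ∫ t in Set.Ioi x, Real.exp (-t) * t ^ (-(1 / 2 : ℝ))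

private lemma integral_Ioi_add_right (f : ℝ → ℝ) (a d : ℝ) :
    ∫ x in Set.Ioi a, f (x + d) = ∫ x in Set.Ioi (a + d), f x := by
  have hmp : MeasurePreserving (fun x : ℝ => x + d) volume volume :=
    measurePreserving_add_right volume d
  have hme : MeasurableEmbedding (fun x : ℝ => x + d) :=
    (MeasurableEquiv.addRight d).measurableEmbedding
  have hpre : (fun x : ℝ => x + d) ⁻¹' Set.Ioi (a + d) = Set.Ioi a := by
    ext x
    simp only [Set.mem_preimage, Set.mem_Ioi]
    constructor <;> intro h <;> linarith
  rw [← hmp.setIntegral_preimage_emb hme f (Set.Ioi (a + d)), hpre]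

/-- The Eichler-type integral along the vertical ray from `-conj τ` to `i∞`
(parametrized by `z = -conj τ + is`, `s ∈ (0,∞)`, where `-i(z+τ) = 2y+s > 0`)
evaluates to an incomplete Gamma value:
`2πn ∫_{-τ̄}^{i∞} e^{2πizn²}/√(-i(z+τ)) dz = i √(2π) e^{-2πin²τ} Γ(1/2, 4πn²y)`. -/
theorem eichler_integral_incGamma (n : ℕ) (hn : 1 ≤ n) (τ : ℂ) (hτ : 0 < τ.im) :
    2 * (π : ℂ) * (n : ℂ) *
      (I * ∫ s in Set.Ioi (0 : ℝ),
        Complex.exp (2 * π * I * (n : ℂ) ^ 2 * (-(starRingEnd ℂ) τ + (s : ℂ) * I)) /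
          (Real.sqrt (2 * τ.im + s) : ℂ)) =
    I * (Real.sqrt (2 * π) : ℂ) * Complex.exp (-2 * π * I * (n : ℂ) ^ 2 * τ) *
      (incGammaHalf (4 * π * (n : ℝ) ^ 2 * τ.im) : ℂ) := by
  set y : ℝ := τ.im with hy
  have hy0 : 0 < y := hτ
  set c : ℝ := 2 * π * (n : ℝ) ^ 2 with hc
  have hn0 : (0:ℝ) < (n:ℝ) := by exact_mod_cast hn
  have hc0 : 0 < c := by positivity
  set J : ℝ := ∫ s in Set.Ioi (0:ℝ), Real.exp (-(c * s)) / Real.sqrt (2 * y + s) with hJ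
  -- Step A: real side
  have hA : incGammaHalf (4 * π * (n:ℝ) ^ 2 * y)
      = Real.sqrt c * Real.exp (-(2 * c * y)) * J := by
    have h1 : incGammaHalf (4 * π * (n:ℝ) ^ 2 * y)
        = ∫ t in Set.Ioi (c * (2 * y)), Real.exp (-t) * t ^ (-(1/2 : ℝ)) := by
      unfold incGammaHalf
      congr 1
      rw [hc]; ring
    have h2 := integral_comp_mul_left_Ioi
        (fun t => Real.exp (-t) * t ^ (-(1/2 : ℝ))) (2 * y) hc0
    simp only [smul_eq_mul] at h2
    have h2' : (∫ t in Set.Ioi (c * (2 * y)), Real.exp (-t) * t ^ (-(1/2 : ℝ)))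
        = c * ∫ x in Set.Ioi (2*y), Real.exp (-(c*x)) * (c*x) ^ (-(1/2 : ℝ)) := by
      rw [h2, mul_inv_cancel_left₀ hc0.ne']
    have h3 := integral_Ioi_add_right
        (fun x => Real.exp (-(c * x)) * (c * x) ^ (-(1/2 : ℝ))) 0 (2 * y)
    simp only [zero_add] at h3
    rw [h1, h2', ← h3, hJ, ← MeasureTheory.integral_const_mul c,
      ← MeasureTheory.integral_const_mul (Real.sqrt c * Real.exp (-(2 * c * y)))]
    refine MeasureTheory.setIntegral_congr_fun measurableSet_Ioi (fun s hs => ?_)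
    have hs0 : 0 < s := hs
    have hspos : 0 < s + 2 * y := by linarith
    have h5 : Real.sqrt c ≠ 0 := by positivity
    have h6 : Real.sqrt (2 * y + s) ≠ 0 :=
      Real.sqrt_ne_zero'.mpr (by linarith)
    rw [Real.mul_rpow hc0.le hspos.le, Real.rpow_neg hc0.le, Real.rpow_neg hspos.le,
      ← Real.sqrt_eq_rpow, ← Real.sqrt_eq_rpow,
      show -(c * (s + 2 * y)) = -(c * s) + -(2 * c * y) by ring, Real.exp_add,
      show s + 2 * y = 2 * y + s by ring]
    field_simp
    ring_nf
    rw [Real.sq_sqrt hc0.le]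
  -- Step B: complex side
  have hB : (∫ s in Set.Ioi (0 : ℝ),
        Complex.exp (2 * π * I * (n : ℂ) ^ 2 * (-(starRingEnd ℂ) τ + (s : ℂ) * I)) /
          (Real.sqrt (2 * y + s) : ℂ))
      = Complex.exp (2 * π * I * (n : ℂ) ^ 2 * (-(starRingEnd ℂ) τ)) * (J : ℂ) := by
    have hpt : ∀ s ∈ Set.Ioi (0:ℝ),
        Complex.exp (2 * π * I * (n : ℂ) ^ 2 * (-(starRingEnd ℂ) τ + (s : ℂ) * I)) /
          (Real.sqrt (2 * y + s) : ℂ)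
        = Complex.exp (2 * π * I * (n : ℂ) ^ 2 * (-(starRingEnd ℂ) τ)) *
            ((Real.exp (-(c * s)) / Real.sqrt (2 * y + s) : ℝ) : ℂ) := by
      intro s _
      rw [show 2 * (π:ℂ) * I * (n : ℂ) ^ 2 * (-(starRingEnd ℂ) τ + (s : ℂ) * I)
          = 2 * π * I * (n : ℂ) ^ 2 * (-(starRingEnd ℂ) τ) + ((-(c * s) : ℝ) : ℂ) by
        push_cast [hc]
        linear_combination (2 * (π:ℂ) * (n:ℂ)^2 * (s:ℂ)) * Complex.I_mul_I]
      rw [Complex.exp_add, ← Complex.ofReal_exp]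
      push_cast
      ring
    have hcast : (∫ a in Set.Ioi (0:ℝ),
        ((Real.exp (-(c*a)) / Real.sqrt (2*y+a) : ℝ) : ℂ)) = ((J : ℝ) : ℂ) := by
      rw [hJ]; exact integral_ofReal
    rw [MeasureTheory.setIntegral_congr_fun measurableSet_Ioi hpt,
      MeasureTheory.integral_const_mul, hcast]
  rw [hB, hA]
  -- Step C: constants
  have hconj : (starRingEnd ℂ) τ = τ - 2 * (y : ℂ) * I := by
    apply Complex.ext <;> simp [hy] <;> ring
  have hsqrt : (Real.sqrt (2*π) : ℝ) * Real.sqrt c = 2 * π * n := by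
    rw [← Real.sqrt_mul (by positivity), hc]
    rw [show 2 * π * (2 * π * (n:ℝ)^2) = (2 * π * n)^2 by ring,
      Real.sqrt_sq (by positivity)]
  have hexp : Complex.exp (2 * π * I * (n : ℂ) ^ 2 * (-(starRingEnd ℂ) τ))
      = Complex.exp (-2 * π * I * (n : ℂ) ^ 2 * τ) * ((Real.exp (-(2 * c * y)) : ℝ) : ℂ) := by
    rw [hconj, Complex.ofReal_exp, ← Complex.exp_add]
    congr 1
    push_cast [hc]
    linear_combination (4 * (π:ℂ) * (n:ℂ)^2 * (y:ℂ)) * Complex.I_mul_I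
  rw [hexp]
  have h2 : ((Real.sqrt (2*π) : ℝ) : ℂ) * ((Real.sqrt c : ℝ) : ℂ) = 2 * (π:ℂ) * (n:ℂ) := by
    rw [← Complex.ofReal_mul, hsqrt]; push_cast; ring
  rw [Complex.ofReal_mul, Complex.ofReal_mul]
  linear_combination (-(I * Complex.exp (-2 * π * I * (n:ℂ)^2 * τ) *
    ((Real.exp (-(2*c*y)) : ℝ) : ℂ) * ((J:ℝ):ℂ))) * h2
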